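/- Let $r : \mathbb{Z} \to \mathbb{R}$ be even with $|r(m)| \le C(1+|m|)^{2H-2}$ for $C>0$, $H \in (0,3/4)$. Then the limit $\Sigma_{12} := \lim_{n\to\infty} \frac{2}{n} \sum_{k,k'=1}^{n} r(k'-k)\,r(k'+1-k)$ exists and equals $4 \sum_{m=0}^{\infty} r(m)\,r(m+1)$, and the series on the right converges absolutely. -/

import Mathlib

open Filter Finset Topology

/-!
Counting the pairs `(k, k')` with `k' - k = m` turns the double sum into the Fejér sum
`∑_{|m| ≤ n} (n - |m|) f(m)` with `f(m) = r(m) r(m+1)`. The decay bound makes `f` absolutely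
summable over `ℤ` since `4H - 4 < -1`, so dominated convergence sends the Fejér means
`(1/n) ∑ (n - |m|) f(m)` to `∑_{m ∈ ℤ} f(m)`, and evenness of `r` gives `f(-m-1) = f(m)`, which
folds the sum over `ℤ` into twice the sum over `ℕ`.
-/

theorem card_filter_sub_eq (n : ℕ) (m : ℤ) :
    #((Icc 1 n ×ˢ Icc 1 n).filter fun p : ℕ × ℕ => (p.2 : ℤ) - p.1 = m) = n - m.natAbs := by
  rw [← card_range (n - m.natAbs)]
  refine card_nbij' (fun p => p.1 - 1 - (-m).toNat)
    (fun i => (i + 1 + (-m).toNat, i + 1 + m.toNat)) ?_ ?_ ?_ ?_ <;>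
  · intro x hx
    simp only [coe_filter, mem_product, mem_Icc, Set.mem_ofPred_eq, coe_range, Set.mem_Iio,
      Prod.ext_iff] at hx ⊢
    omega

theorem sum_Icc_sum_Icc_sub {M : Type*} [AddCommMonoid M] (f : ℤ → M) (n : ℕ) :
    ∑ k ∈ Icc 1 n, ∑ k' ∈ Icc 1 n, f ((k' : ℤ) - k) =
      ∑ m ∈ Icc (-(n : ℤ)) n, (n - m.natAbs) • f m := by
  rw [← sum_product', ← sum_fiberwise_of_maps_to (g := fun p : ℕ × ℕ => (p.2 : ℤ) - p.1)
    (t := Icc (-(n : ℤ)) n)]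
  · refine sum_congr rfl fun m _ => ?_
    rw [sum_congr rfl fun p hp => congrArg f (mem_filter.1 hp).2, sum_const, card_filter_sub_eq]
  · intro p hp
    simp only [mem_product, mem_Icc] at hp ⊢
    omega

theorem tendsto_natCast_sub_div_atTop (a : ℕ) :
    Tendsto (fun n : ℕ => ((n - a : ℕ) : ℝ) / n) atTop (𝓝 1) := by
  have h : Tendsto (fun n : ℕ => 1 - (a : ℝ) / n) atTop (𝓝 1) := by
    simpa using tendsto_const_nhds.sub (tendsto_const_div_atTop_nhds_zero_nat (a : ℝ))
  refine h.congr' ?_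
  filter_upwards [eventually_gt_atTop a] with n hn
  rw [Nat.cast_sub hn.le, sub_div, div_self (Nat.cast_ne_zero.2 (by omega))]

theorem tendsto_inv_smul_sum_Icc_sum_Icc_sub {E : Type*} [NormedAddCommGroup E]
    [NormedSpace ℝ E] [CompleteSpace E] {f : ℤ → E} (hf : Summable (‖f ·‖)) :
    Tendsto (fun n : ℕ => (n : ℝ)⁻¹ • ∑ k ∈ Icc 1 n, ∑ k' ∈ Icc 1 n, f ((k' : ℤ) - k))
      atTop (𝓝 (∑' m, f m)) := by
  set w : ℕ → ℤ → ℝ := fun n m => ((n - m.natAbs : ℕ) : ℝ) / n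
  have hw_le : ∀ n m, ‖w n m‖ ≤ 1 := fun n m => by
    rw [Real.norm_of_nonneg (by positivity)]
    exact div_le_one_of_le₀ (Nat.cast_le.2 (Nat.sub_le _ _)) n.cast_nonneg
  have hmean : ∀ n : ℕ, (n : ℝ)⁻¹ • ∑ k ∈ Icc 1 n, ∑ k' ∈ Icc 1 n, f ((k' : ℤ) - k) =
      ∑' m, w n m • f m := fun n => by
    -- the truncated subtraction in the weight already vanishes outside `[-n, n]`
    rw [sum_Icc_sum_Icc_sub, smul_sum, tsum_eq_sum (s := Icc (-(n : ℤ)) n)]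
    · refine sum_congr rfl fun m _ => ?_
      rw [← Nat.cast_smul_eq_nsmul ℝ, smul_smul, inv_mul_eq_div]
    · intro m hm
      simp only [mem_Icc, not_and_or, not_le] at hm
      have : n - m.natAbs = 0 := by omega
      simp [w, this]
  simp only [hmean]
  refine tendsto_tsum_of_dominated_convergence hf
    (fun m => by simpa using (tendsto_natCast_sub_div_atTop m.natAbs).smul_const (f m))
    (Eventually.of_forall fun n m => ?_)
  exact (norm_smul_le _ _).trans (mul_le_of_le_one_left (norm_nonneg _) (hw_le n m))

theorem summable_abs_mul_succ_of_abs_le_rpow {r : ℤ → ℝ} {C p : ℝ} (hp : 2 * p < -1)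
    (hr : ∀ m : ℤ, |r m| ≤ C * (1 + |(m : ℝ)|) ^ p) :
    Summable (fun m : ℕ => |r m * r (m + 1)|) := by
  have hC : 0 ≤ C := by simpa using (abs_nonneg _).trans (hr 0)
  have hr_nat : ∀ m : ℕ, |r m| ≤ C * ((m : ℝ) + 1) ^ p := fun m => by
    simpa [add_comm] using hr m
  have hr_succ : ∀ m : ℕ, |r (m + 1)| ≤ C * ((m : ℝ) + 1) ^ p := fun m => by
    refine (hr_nat (m + 1)).trans (mul_le_mul_of_nonneg_left ?_ hC)
    exact Real.rpow_le_rpow_of_nonpos (by positivity) (by simp) (by linarith)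
  have hmajor : Summable (fun m : ℕ => C ^ 2 * ((m : ℝ) + 1) ^ (2 * p)) := by
    refine Summable.mul_left _ ?_
    simpa using (summable_nat_add_iff 1).2 (Real.summable_nat_rpow.2 hp)
  refine hmajor.of_nonneg_of_le (fun _ => abs_nonneg _) fun m => ?_
  calc |r m * r (m + 1)| = |r m| * |r (m + 1)| := abs_mul _ _
    _ ≤ (C * ((m : ℝ) + 1) ^ p) * (C * ((m : ℝ) + 1) ^ p) :=
        mul_le_mul (hr_nat m) (hr_succ m) (abs_nonneg _) (mul_nonneg hC (by positivity))
    _ = C ^ 2 * ((m : ℝ) + 1) ^ (2 * p) := by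
        rw [two_mul, Real.rpow_add (by positivity)]; ring

theorem sigma12_limit_general (r : ℤ → ℝ) (C H : ℝ)
    (hH : H < 3 / 4)
    (heven : ∀ m : ℤ, r (-m) = r m)
    (hr : ∀ m : ℤ, |r m| ≤ C * (1 + |(m : ℝ)|) ^ (2 * H - 2)) :
    Summable (fun m : ℕ => |r m * r (m + 1)|) ∧
    Tendsto (fun n : ℕ => (2 / (n : ℝ)) * ∑ k ∈ Icc 1 n, ∑ k' ∈ Icc 1 n,
        r ((k' : ℤ) - k) * r ((k' : ℤ) + 1 - k))
      atTop (nhds (4 * ∑' m : ℕ, r m * r (m + 1))) := by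
  set f : ℤ → ℝ := fun m => r m * r (m + 1)
  have habs : Summable (fun m : ℕ => |f m|) :=
    summable_abs_mul_succ_of_abs_le_rpow (by linarith) hr
  have hreflect : ∀ n : ℕ, f (-(n + 1)) = f n := fun n => by
    simp only [f, show -((n : ℤ) + 1) + 1 = -n by ring, heven, mul_comm]
  have hf : HasSum f (2 * ∑' m : ℕ, f m) := by
    rw [two_mul]
    refine habs.of_abs.hasSum.of_nat_of_neg_add_one ?_
    simp only [hreflect]
    exact habs.of_abs.hasSum
  refine ⟨habs, ?_⟩
  have hnorm : Summable (‖f ·‖) := by simpa only [Real.norm_eq_abs] using hf.summable.abs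
  have hmean := (tendsto_inv_smul_sum_Icc_sum_Icc_sub hnorm).const_mul 2
  rw [hf.tsum_eq, ← mul_assoc, show (2 : ℝ) * 2 = 4 by norm_num] at hmean
  refine hmean.congr fun n => ?_
  simp only [f, smul_eq_mul, sub_add_eq_add_sub]
  ring

theorem sigma12_limit (r : ℤ → ℝ) (C H : ℝ) (hC : 0 < C)
    (hH0 : 0 < H) (hH : H < 3 / 4)
    (heven : ∀ m : ℤ, r (-m) = r m)
    (hr : ∀ m : ℤ, |r m| ≤ C * (1 + |(m : ℝ)|) ^ (2 * H - 2)) :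
    Summable (fun m : ℕ => |r m * r (m + 1)|) ∧
    Tendsto (fun n : ℕ => (2 / (n : ℝ)) * ∑ k ∈ Icc 1 n, ∑ k' ∈ Icc 1 n,
        r ((k' : ℤ) - k) * r ((k' : ℤ) + 1 - k))
      atTop (nhds (4 * ∑' m : ℕ, r m * r (m + 1))) :=
  sigma12_limit_general r C H hH heven hr
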